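/- For every ε > 0 there exists a positive integer m with the following property: for every graph G on n ≥ m vertices that is ε-far from being bipartite (i.e. at least ε·n² edge deletions are needed to make G bipartite), at least (1 − ε/2)·C(n,m) of the m-element vertex subsets of G induce a non-bipartite subgraph. -/

import Mathlib

open Finset
open scoped Classical

variable {V : Type*}

/-- A triangle packing of `G`: a finite collection of triangles (3-cliques) of `G` that are
pairwise edge-disjoint (i.e. any two distinct members share at most one vertex). -/
def SimpleGraph.IsTrianglePacking [DecidableEq V] (G : SimpleGraph V)
    (P : Finset (Finset V)) : Prop :=
  (∀ T ∈ P, G.IsNClique 3 T) ∧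
    (P : Set (Finset V)).Pairwise fun S T => (S ∩ T).card ≤ 1

/-- The maximum size (number of edges, i.e. `3 * number of triangles`) of a triangle packing. -/
noncomputable def SimpleGraph.triangleNu [DecidableEq V] (G : SimpleGraph V) : ℕ :=
  sSup {m | ∃ P : Finset (Finset V), G.IsTrianglePacking P ∧ m = 3 * P.card}

/-- A fractional triangle packing of `G`: a weight function on triples of vertices, supported
on triangles of `G`, with values in `[0,1]`, such that every edge carries total weight ≤ 1. -/
def SimpleGraph.IsFracTrianglePacking [Fintype V] [DecidableEq V] (G : SimpleGraph V)
    (w : Finset V → ℝ) : Prop :=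
  (∀ T, 0 ≤ w T ∧ w T ≤ 1) ∧
  (∀ T, ¬ G.IsNClique 3 T → w T = 0) ∧
  ∀ u v : V, G.Adj u v →
    ∑ T ∈ univ.filter (fun T : Finset V => G.IsNClique 3 T ∧ u ∈ T ∧ v ∈ T), w T ≤ 1

/-- `ν*(G)`: the maximum size `3 ∑ w(T)` of a fractional triangle packing of `G`. -/
noncomputable def SimpleGraph.nuStar [Fintype V] [DecidableEq V] (G : SimpleGraph V) : ℝ :=
  sSup {x | ∃ w : Finset V → ℝ, G.IsFracTrianglePacking w ∧ x = 3 * ∑ T : Finset V, w T}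

/-- `η(G) = ν*(G)/(n(n-1))` where `n = |V(G)|`. -/
noncomputable def SimpleGraph.etaPack [Fintype V] [DecidableEq V] (G : SimpleGraph V) : ℝ :=
  G.nuStar / ((Fintype.card V : ℝ) * ((Fintype.card V : ℝ) - 1))

/-- A fractional triangle decomposition: a fractional packing with equality on every edge. -/
def SimpleGraph.IsFracTriangleDecomposition [Fintype V] [DecidableEq V] (G : SimpleGraph V)
    (w : Finset V → ℝ) : Prop :=
  G.IsFracTrianglePacking w ∧
  ∀ u v : V, G.Adj u v →
    ∑ T ∈ univ.filter (fun T : Finset V => G.IsNClique 3 T ∧ u ∈ T ∧ v ∈ T), w T = 1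

/-- `G` is `ε`-far from bipartite: every bipartite subgraph misses at least `ε n²` edges. -/
def FarFromBipartite [Fintype V] [DecidableEq V] (ε : ℝ) (G : SimpleGraph V) : Prop :=
  ∀ H : SimpleGraph V, H ≤ G → H.Colorable 2 →
    ε * (Fintype.card V : ℝ) ^ 2 ≤ (G.edgeFinset.card : ℝ) - (H.edgeFinset.card : ℝ)

/-- The disjoint union of two cliques on `⌈n/2⌉`-ish halves of `Fin n`
(the first `n/2` vertices form one clique, the rest form the other). -/
def twoCliques (n : ℕ) : SimpleGraph (Fin n) where
  Adj u v := u ≠ v ∧ ((u : ℕ) < n / 2 ↔ (v : ℕ) < n / 2)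
  symm := ⟨fun u v h => ⟨h.1.symm, h.2.symm⟩⟩
  loopless := ⟨fun u h => h.1 rfl⟩

/-- `g(n)`: minimum over co-triangle-free `n`-vertex graphs of the max triangle packing size. -/
noncomputable def gInt (n : ℕ) : ℕ :=
  sInf {m | ∃ G : SimpleGraph (Fin n), Gᶜ.CliqueFree 3 ∧ m = G.triangleNu}

/-- `g*(n)`: minimum over co-triangle-free `n`-vertex graphs of `ν*`. -/
noncomputable def gStar (n : ℕ) : ℝ :=
  sInf {x | ∃ G : SimpleGraph (Fin n), Gᶜ.CliqueFree 3 ∧ x = G.nuStar}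

/-!
Sample `a` anchor vertices and `b` ordered pairs of vertices. A 2-colouring `χ` of the anchors
extends to every vertex with an anchor neighbour, by giving it the colour opposite to that of one
such neighbour. As `G` is `ε`-far from bipartite, this extension has at least `2εn²`
monochromatic ordered edges. Unless the anchors miss at least `εn/4` vertices of degree at least
`εn/2` (a fraction at most `(4/ε)(1-ε/2)^a` of the anchor tuples, by Markov's inequality), at least
`εn²/2` of these edges join two vertices with an anchor neighbour. If the sample induces a
bipartite graph, its colouring restricted to the anchors is a `χ` for which none of the `b` pairs
is such an edge, which happens for a fraction at most `2^a (1-ε/2)^b` of the pair tuples. Hence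
at most an `ε/4` fraction of the samples of size `k = a + 2b` are bipartite, and since the
samples without repetitions make up at least half of all samples once `n ≥ 2k²`, at most an `ε/2`
fraction of the `k`-sets are bipartite. Being bipartite is hereditary, so by the local LYM
inequality the same bound holds for the `m`-sets with `m = 2k²`.
-/

open scoped Nat

namespace SimpleGraph

lemma exists_bichromatic_subgraph (G : SimpleGraph V) (C : V → Bool) :
    ∃ H ≤ G, H.Colorable 2 ∧ ∀ u v, H.Adj u v ↔ G.Adj u v ∧ C u ≠ C v :=
  ⟨G ⊓ (⊤ : SimpleGraph Bool).comap C, inf_le_left,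
    (Coloring.colorable (Hom.comap C ⊤)).mono_left inf_le_right, fun _ _ => by simp⟩

lemma Colorable.induce_of_subset {G : SimpleGraph V} {s t : Set V} {k : ℕ} (hst : s ⊆ t)
    (h : (G.induce t).Colorable k) : (G.induce s).Colorable k :=
  h.of_hom (G.induceHomOfLE hst).toHom

variable [Fintype V] (G : SimpleGraph V)

lemma card_adj_pairs_fst_mem [DecidableEq V] (s : Finset V) :
    #{p : V × V | G.Adj p.1 p.2 ∧ p.1 ∈ s} = ∑ u ∈ s, G.degree u := by
  have : ({p : V × V | G.Adj p.1 p.2 ∧ p.1 ∈ s} : Finset (V × V)) =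
      (s.sigma fun u => G.neighborFinset u).map (Equiv.sigmaEquivProd V V).toEmbedding := by
    ext ⟨u, v⟩
    simp [and_comm]
  simp [this, card_neighborFinset_eq_degree]

lemma card_adj_pairs_snd_mem [DecidableEq V] (s : Finset V) :
    #{p : V × V | G.Adj p.1 p.2 ∧ p.2 ∈ s} = ∑ u ∈ s, G.degree u := by
  rw [← card_adj_pairs_fst_mem]
  exact card_equiv (Equiv.prodComm V V) fun p => by simp [G.adj_comm]

noncomputable def monochromaticPairs (C : V → Bool) : Finset (V × V) :=
  {p | G.Adj p.1 p.2 ∧ C p.1 = C p.2}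

lemma card_monochromaticPairs_add {C : V → Bool} {H : SimpleGraph V}
    (hH : ∀ u v, H.Adj u v ↔ G.Adj u v ∧ C u ≠ C v) :
    #(G.monochromaticPairs C) + #{p : V × V | H.Adj p.1 p.2} =
      #{p : V × V | G.Adj p.1 p.2} := by
  rw [← card_filter_add_card_filter_not (s := univ.filter fun p : V × V => G.Adj p.1 p.2)
    (fun p => C p.1 = C p.2), filter_filter, filter_filter]
  congr 2
  ext
  simp [hH]


end SimpleGraph

namespace FarFromBipartite

variable [Fintype V] [DecidableEq V] {ε : ℝ} {G : SimpleGraph V}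

lemma mono {δ : ℝ} (hG : FarFromBipartite ε G) (hδ : δ ≤ ε) : FarFromBipartite δ G :=
  fun H hH hc => (mul_le_mul_of_nonneg_right hδ (sq_nonneg _)).trans (hG H hH hc)

lemma two_mul_le_card_monochromaticPairs (hG : FarFromBipartite ε G) (C : V → Bool) :
    2 * (ε * Fintype.card V ^ 2) ≤ #(G.monochromaticPairs C) := by
  obtain ⟨H, hle, hcol, hH⟩ := G.exists_bichromatic_subgraph C
  have hG2 : 2 * #G.edgeFinset = #{p : V × V | G.Adj p.1 p.2} := by
    convert G.two_mul_card_edgeFinset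
  have hH2 : 2 * #H.edgeFinset = #{p : V × V | H.Adj p.1 p.2} := by
    convert H.two_mul_card_edgeFinset
  have hcount : (#(G.monochromaticPairs C) : ℝ) = 2 * #G.edgeFinset - 2 * #H.edgeFinset := by
    rw [eq_sub_iff_add_eq]
    exact_mod_cast hH2 ▸ hG2 ▸ G.card_monochromaticPairs_add hH
  linarith [hG H hle hcol]

end FarFromBipartite

namespace SimpleGraph

variable {ι : Type*} (G : SimpleGraph V)

/-- Vertices without a neighbour among the anchors get the junk colour `false`; they never
enter `conflictPairs`. -/
noncomputable def extendColoring (α : ι → V) (χ : ι → Bool) (v : V) : Bool :=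
  if h : ∃ i, G.Adj (α i) v then !χ h.choose else false

lemma extendColoring_eq_of_coloring {S : Set V} (c : (G.induce S).Coloring Bool) {α : ι → V}
    (hα : ∀ i, α i ∈ S) {v : V} (hv : v ∈ S) (hreach : ∃ i, G.Adj (α i) v) :
    G.extendColoring α (fun i => c ⟨α i, hα i⟩) v = c ⟨v, hv⟩ := by
  have hne : c ⟨α hreach.choose, hα _⟩ ≠ c ⟨v, hv⟩ :=
    c.valid (by simpa using hreach.choose_spec)
  rw [extendColoring, dif_pos hreach]
  revert hne
  cases c ⟨α hreach.choose, hα _⟩ <;> cases c ⟨v, hv⟩ <;> simp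

variable [Fintype V]

noncomputable def unreached (α : ι → V) : Finset V := {v | ∀ i, ¬ G.Adj (α i) v}

noncomputable def conflictPairs [DecidableEq V] (α : ι → V) (χ : ι → Bool) : Finset (V × V) :=
  {p ∈ G.monochromaticPairs (G.extendColoring α χ) | p.1 ∉ G.unreached α ∧ p.2 ∉ G.unreached α}

lemma exists_forall_notMem_conflictPairs [DecidableEq V] {S : Set V}
    (hS : (G.induce S).Colorable 2) {α : ι → V} (hα : ∀ i, α i ∈ S) :
    ∃ χ : ι → Bool, ∀ u ∈ S, ∀ v ∈ S, (u, v) ∉ G.conflictPairs α χ := by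
  let c : (G.induce S).Coloring Bool := hS.toColoring (by simp)
  refine ⟨fun i => c ⟨α i, hα i⟩, fun u hu v hv huv => ?_⟩
  simp only [conflictPairs, monochromaticPairs, unreached, mem_filter, mem_univ, true_and,
    not_forall, not_not] at huv
  obtain ⟨⟨hadj, hmono⟩, hu', hv'⟩ := huv
  rw [G.extendColoring_eq_of_coloring c hα hu hu', G.extendColoring_eq_of_coloring c hα hv hv']
    at hmono
  exact c.valid (by simpa using hadj) hmono

variable (ε : ℝ)

noncomputable def highDegreeUnreached (α : ι → V) : Finset V :=
  {v ∈ G.unreached α | ε * Fintype.card V / 2 ≤ G.degree v}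

noncomputable def badAnchors (ι : Type*) [Fintype ι] [DecidableEq ι] : Finset (ι → V) :=
  {α | ε * Fintype.card V / 4 ≤ #(G.highDegreeUnreached ε α)}

variable [Fintype ι] [DecidableEq ι]

lemma card_filter_mem_highDegreeUnreached_le (hε : ε ≤ 2) (v : V) :
    (#{α : ι → V | v ∈ G.highDegreeUnreached ε α} : ℝ) ≤
      ((1 - ε / 2) * Fintype.card V) ^ Fintype.card ι := by
  by_cases hv : ε * Fintype.card V / 2 ≤ G.degree v
  · have hsub : ({α : ι → V | v ∈ G.highDegreeUnreached ε α} : Finset (ι → V)) ⊆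
        Fintype.piFinset fun _ => (G.neighborFinset v)ᶜ := by
      intro α hα
      simp only [highDegreeUnreached, unreached, mem_filter, mem_univ, true_and] at hα
      simpa [Fintype.mem_piFinset, G.adj_comm] using hα.1
    have hdeg : (#(G.neighborFinset v)ᶜ : ℝ) ≤ (1 - ε / 2) * Fintype.card V := by
      rw [card_compl, card_neighborFinset_eq_degree, Nat.cast_sub (G.degree_lt_card_verts v).le]
      linarith
    calc (#{α : ι → V | v ∈ G.highDegreeUnreached ε α} : ℝ)
        ≤ #(Fintype.piFinset fun _ : ι => (G.neighborFinset v)ᶜ) := by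
          exact_mod_cast card_le_card hsub
      _ = (#(G.neighborFinset v)ᶜ : ℝ) ^ Fintype.card ι := by simp
      _ ≤ _ := by gcongr
  · have hempty : ({α : ι → V | v ∈ G.highDegreeUnreached ε α} : Finset (ι → V)) = ∅ :=
      filter_eq_empty_iff.mpr fun α _ hα => hv (mem_filter.mp hα).2
    have : 0 ≤ 1 - ε / 2 := by linarith
    rw [hempty, card_empty, Nat.cast_zero]
    positivity

lemma card_badAnchors_mul_le (hε : ε ≤ 2) :
    (#(G.badAnchors ε ι) : ℝ) * (ε * Fintype.card V / 4) ≤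
      Fintype.card V * ((1 - ε / 2) * Fintype.card V) ^ Fintype.card ι := by
  have hswap : ∑ α : ι → V, #(G.highDegreeUnreached ε α) =
      ∑ v : V, #{α : ι → V | v ∈ G.highDegreeUnreached ε α} := by
    simpa [bipartiteAbove, bipartiteBelow] using
      sum_card_bipartiteAbove_eq_sum_card_bipartiteBelow (s := (univ : Finset (ι → V)))
        (t := (univ : Finset V)) (r := fun α v => v ∈ G.highDegreeUnreached ε α)
  calc (#(G.badAnchors ε ι) : ℝ) * (ε * Fintype.card V / 4)
      = ∑ _α ∈ G.badAnchors ε ι, ε * Fintype.card V / 4 := by simp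
    _ ≤ ∑ α ∈ G.badAnchors ε ι, (#(G.highDegreeUnreached ε α) : ℝ) :=
        sum_le_sum fun α hα => (mem_filter.mp hα).2
    _ ≤ ∑ α : ι → V, (#(G.highDegreeUnreached ε α) : ℝ) :=
        sum_le_sum_of_subset_of_nonneg (subset_univ _) fun _ _ _ => Nat.cast_nonneg _
    _ = ∑ v : V, (#{α : ι → V | v ∈ G.highDegreeUnreached ε α} : ℝ) := by
        exact_mod_cast hswap
    _ ≤ ∑ _v : V, ((1 - ε / 2) * Fintype.card V) ^ Fintype.card ι :=
        sum_le_sum fun v _ => G.card_filter_mem_highDegreeUnreached_le ε hε v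
    _ = _ := by simp

variable {G ε}

lemma sum_degree_unreached_le (hε : 0 ≤ ε) {α : ι → V} (hα : α ∉ G.badAnchors ε ι) :
    ∑ v ∈ G.unreached α, (G.degree v : ℝ) ≤ 3 / 4 * (ε * Fintype.card V ^ 2) := by
  set low := {v ∈ G.unreached α | ¬ ε * Fintype.card V / 2 ≤ G.degree v}
  have hsplit : ∑ v ∈ G.unreached α, (G.degree v : ℝ) =
      ∑ v ∈ G.highDegreeUnreached ε α, (G.degree v : ℝ) + ∑ v ∈ low, (G.degree v : ℝ) :=
    (sum_filter_add_sum_filter_not _ _ _).symm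
  have hhigh_card : (#(G.highDegreeUnreached ε α) : ℝ) ≤ ε * Fintype.card V / 4 := by
    simp only [badAnchors, mem_filter, mem_univ, true_and, not_le] at hα
    exact hα.le
  have hlow_card : (#low : ℝ) ≤ Fintype.card V := by exact_mod_cast card_le_univ _
  have hhigh := sum_le_card_nsmul (G.highDegreeUnreached ε α) (fun v => (G.degree v : ℝ))
    (Fintype.card V) fun v _ => by exact_mod_cast (G.degree_lt_card_verts v).le
  have hlow := sum_le_card_nsmul low (fun v => (G.degree v : ℝ)) (ε * Fintype.card V / 2)
    fun v hv => (not_le.mp (mem_filter.mp hv).2).le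
  rw [nsmul_eq_mul] at hhigh hlow
  rw [hsplit]
  nlinarith [mul_le_mul_of_nonneg_right hhigh_card (Nat.cast_nonneg (Fintype.card V)),
    mul_le_mul_of_nonneg_right hlow_card (by positivity : 0 ≤ ε * Fintype.card V / 2)]

end SimpleGraph

namespace FarFromBipartite

variable [Fintype V] [DecidableEq V] {ε : ℝ} {G : SimpleGraph V} {ι : Type*} [Fintype ι]
  [DecidableEq ι]

lemma le_card_conflictPairs (hG : FarFromBipartite ε G) (hε : 0 ≤ ε) {α : ι → V}
    (hα : α ∉ G.badAnchors ε ι) (χ : ι → Bool) :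
    ε / 2 * Fintype.card V ^ 2 ≤ #(G.conflictPairs α χ) := by
  have hcover : G.monochromaticPairs (G.extendColoring α χ) ⊆ G.conflictPairs α χ ∪
      (({p : V × V | G.Adj p.1 p.2 ∧ p.1 ∈ G.unreached α} : Finset (V × V)) ∪
        ({p : V × V | G.Adj p.1 p.2 ∧ p.2 ∈ G.unreached α} : Finset (V × V))) := by
    intro p hp
    by_cases hreach : p.1 ∉ G.unreached α ∧ p.2 ∉ G.unreached α
    · exact mem_union_left _ (mem_filter.mpr ⟨hp, hreach⟩)
    simp only [SimpleGraph.monochromaticPairs, mem_filter, mem_univ, true_and] at hp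
    simp only [mem_union, mem_filter, mem_univ, true_and]
    tauto
  have hcard := (card_le_card hcover).trans <|
    (card_union_le _ _).trans (Nat.add_le_add_left (card_union_le _ _) _)
  rw [G.card_adj_pairs_fst_mem, G.card_adj_pairs_snd_mem] at hcard
  have hcard' : (#(G.monochromaticPairs (G.extendColoring α χ)) : ℝ) ≤
      #(G.conflictPairs α χ) + 2 * ∑ v ∈ G.unreached α, (G.degree v : ℝ) := by
    rw [two_mul]
    exact_mod_cast hcard
  linarith [hG.two_mul_le_card_monochromaticPairs (G.extendColoring α χ),
    SimpleGraph.sum_degree_unreached_le hε hα]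

lemma card_compl_conflictPairs_le (hG : FarFromBipartite ε G) (hε : 0 ≤ ε) {α : ι → V}
    (hα : α ∉ G.badAnchors ε ι) (χ : ι → Bool) :
    (#(G.conflictPairs α χ)ᶜ : ℝ) ≤ (1 - ε / 2) * Fintype.card V ^ 2 := by
  rw [card_compl, Nat.cast_sub (card_le_univ _), Fintype.card_prod]
  push_cast
  linarith [hG.le_card_conflictPairs hε hα χ]

end FarFromBipartite

/-- Samples are counted as tuples indexed by `ι ⊕ κ × Fin 2` but analysed as anchors and
ordered pairs. -/
def sampleEquiv (ι κ V : Type*) : (ι ⊕ κ × Fin 2 → V) ≃ (ι → V) × (κ → V × V) :=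
  (Equiv.sumArrowEquivProdArrow _ _ _).trans <| Equiv.prodCongr (Equiv.refl _) <|
    (Equiv.curry _ _ _).trans <| Equiv.arrowCongr (Equiv.refl _) (finTwoArrowEquiv V)

section Sampling

variable {ι κ : Type*} [Fintype ι] [Fintype κ] [DecidableEq V]

noncomputable def sampleVerts (p : (ι → V) × (κ → V × V)) : Finset V :=
  univ.image ((sampleEquiv ι κ V).symm p)

lemma anchor_mem_sampleVerts (p : (ι → V) × (κ → V × V)) (i : ι) : p.1 i ∈ sampleVerts p :=
  mem_image.mpr ⟨Sum.inl i, mem_univ _, rfl⟩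

lemma pair_fst_mem_sampleVerts (p : (ι → V) × (κ → V × V)) (j : κ) :
    (p.2 j).1 ∈ sampleVerts p :=
  mem_image.mpr ⟨Sum.inr (j, 0), mem_univ _, rfl⟩

lemma pair_snd_mem_sampleVerts (p : (ι → V) × (κ → V × V)) (j : κ) :
    (p.2 j).2 ∈ sampleVerts p :=
  mem_image.mpr ⟨Sum.inr (j, 1), mem_univ _, rfl⟩

variable [DecidableEq ι] [DecidableEq κ] [Fintype V]

lemma card_filter_sampleVerts (P : Finset V → Prop) :
    #{x : ι ⊕ κ × Fin 2 → V | P (univ.image x)} =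
      #{p : (ι → V) × (κ → V × V) | P (sampleVerts p)} := by
  rw [← Fintype.card_subtype, ← Fintype.card_subtype]
  exact Fintype.card_congr <| (sampleEquiv ι κ V).subtypeEquiv fun x => by simp [sampleVerts]

end Sampling

lemma card_filter_powersetCard_mul_factorial_le {ι : Type*} [Fintype ι] [DecidableEq ι]
    [Fintype V] [DecidableEq V] (P : Finset V → Prop) :
    #{S ∈ powersetCard (Fintype.card ι) (univ : Finset V) | P S} * (Fintype.card ι)! ≤
      #{x : ι → V | P (univ.image x)} := by
  set 𝒮 : Finset (Finset V) := {S ∈ powersetCard (Fintype.card ι) univ | P S}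
  have hfiber : ∀ S ∈ 𝒮, (Fintype.card ι)! ≤ #{x : ι → V | univ.image x = S} := by
    intro S hS
    have hcard : Fintype.card ι = Fintype.card S := by
      simp [(mem_powersetCard.mp (mem_filter.mp hS).1).2]
    rw [← Fintype.card_equiv (Fintype.equivOfCardEq hcard), ← card_univ]
    refine card_le_card_of_injOn (fun e i => (e i : V)) (fun e _ => ?_)
      fun e _ e' _ h => Equiv.ext fun i => Subtype.ext (congrFun h i)
    simp only [coe_filter, mem_univ, true_and, Set.mem_ofPred_eq]
    ext v
    simp only [mem_image, mem_univ, true_and]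
    exact ⟨fun ⟨i, hi⟩ => hi ▸ (e i).2, fun hv => ⟨e.symm ⟨v, hv⟩, by simp⟩⟩
  calc #𝒮 * (Fintype.card ι)! = ∑ _S ∈ 𝒮, (Fintype.card ι)! := by rw [sum_const, smul_eq_mul]
    _ ≤ ∑ S ∈ 𝒮, #{x : ι → V | univ.image x = S} := sum_le_sum hfiber
    _ = #(𝒮.biUnion fun S => {x : ι → V | univ.image x = S}) := by
        refine (card_biUnion fun S _ S' _ hSS' => disjoint_left.mpr fun x hx hx' => hSS' ?_).symm
        exact (mem_filter.mp hx).2.symm.trans (mem_filter.mp hx').2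
    _ ≤ #{x : ι → V | P (univ.image x)} := by
        refine card_le_card fun x hx => ?_
        obtain ⟨S, hS, hx⟩ := mem_biUnion.mp hx
        simpa [(mem_filter.mp hx).2] using (mem_filter.mp hS).2

lemma cast_card_biUnion_le {α β : Type*} [DecidableEq β] (s : Finset α) (t : α → Finset β)
    {c : ℝ} (h : ∀ a ∈ s, (#(t a) : ℝ) ≤ c) : (#(s.biUnion t) : ℝ) ≤ #s * c := by
  calc (#(s.biUnion t) : ℝ) ≤ ∑ a ∈ s, (#(t a) : ℝ) := by exact_mod_cast card_biUnion_le
    _ ≤ #s * c := by simpa using sum_le_card_nsmul s _ c h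

lemma SimpleGraph.colorable_samples_subset [Fintype V] [DecidableEq V] (G : SimpleGraph V)
    (ε : ℝ) (ι κ : Type*) [Fintype ι] [DecidableEq ι] [Fintype κ] [DecidableEq κ] :
    ({p : (ι → V) × (κ → V × V) | (G.induce (sampleVerts p : Set V)).Colorable 2} :
      Finset _) ⊆ G.badAnchors ε ι ×ˢ univ ∪
        (G.badAnchors ε ι)ᶜ.biUnion fun α => univ.biUnion fun χ : ι → Bool =>
          {α} ×ˢ Fintype.piFinset fun _ => (G.conflictPairs α χ)ᶜ := by
  intro p hp
  by_cases hbad : p.1 ∈ G.badAnchors ε ι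
  · exact mem_union_left _ (mem_product.mpr ⟨hbad, mem_univ _⟩)
  obtain ⟨χ, hχ⟩ := G.exists_forall_notMem_conflictPairs (mem_filter.mp hp).2
    (anchor_mem_sampleVerts p)
  refine mem_union_right _ (mem_biUnion.mpr ⟨p.1, mem_compl.mpr hbad,
    mem_biUnion.mpr ⟨χ, mem_univ _, mem_product.mpr ⟨mem_singleton_self _, ?_⟩⟩⟩)
  simpa [Fintype.mem_piFinset] using fun j =>
    hχ _ (pair_fst_mem_sampleVerts p j) _ (pair_snd_mem_sampleVerts p j)

namespace FarFromBipartite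

variable [Fintype V] [DecidableEq V] {ε : ℝ} {G : SimpleGraph V}

lemma card_colorable_samples_le_card_badAnchors (hG : FarFromBipartite ε G) (hε : 0 ≤ ε)
    (hε2 : ε ≤ 2) (ι κ : Type*) [Fintype ι] [DecidableEq ι] [Fintype κ] [DecidableEq κ] :
    (#{p : (ι → V) × (κ → V × V) | (G.induce (sampleVerts p : Set V)).Colorable 2} : ℝ) ≤
      #(G.badAnchors ε ι) * (Fintype.card V ^ 2) ^ Fintype.card κ +
        Fintype.card V ^ Fintype.card ι *
          (2 ^ Fintype.card ι * ((1 - ε / 2) * Fintype.card V ^ 2) ^ Fintype.card κ) := by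
  have hgood : (#(G.badAnchors ε ι)ᶜ : ℝ) ≤ Fintype.card V ^ Fintype.card ι := by
    exact_mod_cast (card_le_univ _).trans_eq (by simp)
  have hconflict : ∀ α ∈ (G.badAnchors ε ι)ᶜ, ∀ χ : ι → Bool,
      (#({α} ×ˢ Fintype.piFinset fun _ : κ => (G.conflictPairs α χ)ᶜ) : ℝ) ≤
        ((1 - ε / 2) * Fintype.card V ^ 2) ^ Fintype.card κ := by
    intro α hα χ
    simp only [card_product, card_singleton, one_mul, Fintype.card_piFinset, prod_const,
      card_univ, Nat.cast_pow]
    exact pow_le_pow_left₀ (Nat.cast_nonneg _)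
      (hG.card_compl_conflictPairs_le hε (mem_compl.mp hα) χ) _
  have h2 : (0 : ℝ) ≤ 1 - ε / 2 := by linarith
  calc _ ≤ (#(G.badAnchors ε ι ×ˢ (univ : Finset (κ → V × V))) : ℝ) +
        #((G.badAnchors ε ι)ᶜ.biUnion fun α => univ.biUnion fun χ : ι → Bool =>
          {α} ×ˢ Fintype.piFinset fun _ => (G.conflictPairs α χ)ᶜ) := by
        exact_mod_cast (card_le_card (G.colorable_samples_subset ε ι κ)).trans
          (card_union_le _ _)
    _ ≤ _ := by
        gcongr
        · simp [sq]
        refine (cast_card_biUnion_le _ _ fun α hα =>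
          cast_card_biUnion_le _ _ fun χ _ => hconflict α hα χ).trans ?_
        simp only [card_univ, Fintype.card_pi, Fintype.card_bool, prod_const, Nat.cast_pow,
          Nat.cast_ofNat]
        exact mul_le_mul_of_nonneg_right hgood (by positivity)

lemma card_colorable_samples_le (hG : FarFromBipartite ε G) (hε : 0 < ε) (hε2 : ε ≤ 2)
    (hV : 0 < Fintype.card V) {a b : ℕ} (ha : 4 / ε * (1 - ε / 2) ^ a ≤ ε / 8)
    (hb : 2 ^ a * (1 - ε / 2) ^ b ≤ ε / 8) :
    (#{p : (Fin a → V) × (Fin b → V × V) | (G.induce (sampleVerts p : Set V)).Colorable 2} :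
      ℝ) ≤ ε / 4 * Fintype.card V ^ (a + 2 * b) := by
  set n : ℝ := (Fintype.card V : ℝ)
  have hn : 0 < n := Nat.cast_pos.mpr hV
  have hmarkov : (#(G.badAnchors ε (Fin a)) : ℝ) * (ε * n / 4) ≤ n * ((1 - ε / 2) * n) ^ a := by
    simpa using G.card_badAnchors_mul_le ε hε2 (ι := Fin a)
  have hbad : (#(G.badAnchors ε (Fin a)) : ℝ) ≤ 4 / ε * (1 - ε / 2) ^ a * n ^ a := by
    calc (#(G.badAnchors ε (Fin a)) : ℝ)
        = #(G.badAnchors ε (Fin a)) * (ε * n / 4) / (ε * n / 4) := by field_simp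
      _ ≤ n * ((1 - ε / 2) * n) ^ a / (ε * n / 4) := by gcongr
      _ = 4 / ε * (1 - ε / 2) ^ a * n ^ a := by rw [mul_pow]; field_simp
  have hsamples := hG.card_colorable_samples_le_card_badAnchors hε.le hε2 (Fin a) (Fin b)
  simp only [Fintype.card_fin] at hsamples
  refine hsamples.trans ?_
  calc _ ≤ (4 / ε * (1 - ε / 2) ^ a * n ^ a) * (n ^ 2) ^ b +
        n ^ a * (2 ^ a * ((1 - ε / 2) * n ^ 2) ^ b) := by gcongr
    _ = (4 / ε * (1 - ε / 2) ^ a + 2 ^ a * (1 - ε / 2) ^ b) * n ^ (a + 2 * b) := by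
        rw [mul_pow, pow_add, pow_mul]
        ring
    _ ≤ (ε / 8 + ε / 8) * n ^ (a + 2 * b) := by gcongr
    _ = ε / 4 * n ^ (a + 2 * b) := by ring

end FarFromBipartite

lemma pow_le_two_mul_factorial_mul_choose {n m : ℕ} (h : 2 * m ^ 2 ≤ n) :
    (n : ℝ) ^ m ≤ 2 * m ! * n.choose m := by
  rcases m.eq_zero_or_pos with rfl | hm
  · norm_num
  have hmn : m ≤ n := (Nat.le_self_pow two_ne_zero m).trans (by omega)
  have hn : (0 : ℝ) < n := by exact_mod_cast hm.trans_le hmn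
  have hratio : (m : ℝ) / n ≤ 1 := (div_le_one hn).mpr (by exact_mod_cast hmn)
  have hhalf : (m : ℝ) * (m / n) ≤ 1 / 2 := by
    rw [← mul_div_assoc, div_le_iff₀ hn]
    have : (2 * m ^ 2 : ℝ) ≤ n := by exact_mod_cast h
    nlinarith
  have hbernoulli : 1 / 2 ≤ (1 - m / n : ℝ) ^ m := by
    have := one_add_mul_le_pow (a := -((m : ℝ) / n))
      (by linarith [div_nonneg (Nat.cast_nonneg m) hn.le]) m
    rw [← sub_eq_add_neg] at this
    linarith
  have hsub : (n : ℝ) * (1 - m / n) ≤ ((n + 1 - m : ℕ) : ℝ) := by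
    rw [Nat.cast_sub (by omega), mul_sub, mul_div_cancel₀ _ hn.ne']
    push_cast
    linarith
  have hchoose := Nat.pow_le_choose (α := ℝ) m n
  rw [div_le_iff₀ (by positivity)] at hchoose
  have hpow : (n : ℝ) ^ m * (1 - m / n) ^ m ≤ ((n + 1 - m : ℕ) : ℝ) ^ m := by
    rw [← mul_pow]
    gcongr
  nlinarith [pow_pos hn m]

lemma antitone_card_filter_powersetCard_div_choose [Fintype V] [DecidableEq V]
    (P : Finset V → Prop) (hP : ∀ ⦃s t : Finset V⦄, s ⊆ t → P t → P s) :
    Antitone fun r => (#{s ∈ powersetCard r (univ : Finset V) | P s} : ℝ) /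
      (Fintype.card V).choose r := by
  refine antitone_nat_of_succ_le fun r => ?_
  have hsized : (({s ∈ powersetCard (r + 1) univ | P s} : Finset (Finset V)) :
      Set (Finset V)).Sized (r + 1) := fun s hs => (mem_powersetCard.mp (mem_filter.mp hs).1).2
  refine (local_lubell_yamamoto_meshalkin_inequality_div r.succ_ne_zero hsized).trans ?_
  refine div_le_div_of_nonneg_right (Nat.cast_le.mpr (card_le_card fun s hs => ?_))
    (Nat.cast_nonneg _)
  obtain ⟨t, ht, v, hv, rfl⟩ := mem_shadow_iff.mp hs
  obtain ⟨ht, hPt⟩ := mem_filter.mp ht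
  refine mem_filter.mpr ⟨mem_powersetCard.mpr ⟨subset_univ _, ?_⟩, hP (erase_subset v t) hPt⟩
  rw [card_erase_of_mem hv, (mem_powersetCard.mp ht).2, Nat.add_sub_cancel]

lemma card_filter_powersetCard_le_of_le [Fintype V] [DecidableEq V]
    (P : Finset V → Prop) (hP : ∀ ⦃s t : Finset V⦄, s ⊆ t → P t → P s) {k m : ℕ} (hkm : k ≤ m)
    (hk : k ≤ Fintype.card V) {c : ℝ}
    (h : (#{s ∈ powersetCard k (univ : Finset V) | P s} : ℝ) ≤ c * (Fintype.card V).choose k) :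
    (#{s ∈ powersetCard m (univ : Finset V) | P s} : ℝ) ≤ c * (Fintype.card V).choose m := by
  have hchoose : (0 : ℝ) < (Fintype.card V).choose k := by exact_mod_cast Nat.choose_pos hk
  have hdensity : (#{s ∈ powersetCard m (univ : Finset V) | P s} : ℝ) /
      (Fintype.card V).choose m ≤ c :=
    (antitone_card_filter_powersetCard_div_choose P hP hkm).trans ((div_le_iff₀ hchoose).mpr h)
  rcases (Nat.cast_nonneg ((Fintype.card V).choose m) : (0 : ℝ) ≤ _).eq_or_lt with hm | hm
  · have hle : #{s ∈ powersetCard m (univ : Finset V) | P s} ≤ (Fintype.card V).choose m := by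
      simpa using card_filter_le (powersetCard m (univ : Finset V)) P
    rw [← hm, mul_zero]
    exact_mod_cast hle.trans (by exact_mod_cast hm.symm.le)
  · exact (div_le_iff₀ hm).mp hdensity

lemma FarFromBipartite.card_colorable_induce_le [Fintype V] [DecidableEq V] {ε : ℝ}
    {G : SimpleGraph V} (hG : FarFromBipartite ε G) (hε : 0 < ε) (hε2 : ε ≤ 2) {a b : ℕ}
    (ha0 : 0 < a) (ha : 4 / ε * (1 - ε / 2) ^ a ≤ ε / 8) (hb : 2 ^ a * (1 - ε / 2) ^ b ≤ ε / 8)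
    (hn : 2 * (a + 2 * b) ^ 2 ≤ Fintype.card V) :
    (#((powersetCard (a + 2 * b) (univ : Finset V)).filter
      fun S : Finset V => (G.induce (S : Set V)).Colorable 2) : ℝ) ≤
      ε / 2 * (Fintype.card V).choose (a + 2 * b) := by
  have hV : 0 < Fintype.card V := (by positivity : 0 < 2 * (a + 2 * b) ^ 2).trans_le hn
  have hcard : Fintype.card (Fin a ⊕ Fin b × Fin 2) = a + 2 * b := by simp [mul_comm]
  have hsets := card_filter_powersetCard_mul_factorial_le (ι := Fin a ⊕ Fin b × Fin 2) (V := V)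
    fun S : Finset V => (G.induce (S : Set V)).Colorable 2
  rw [hcard, card_filter_sampleVerts fun S : Finset V => (G.induce (S : Set V)).Colorable 2]
    at hsets
  refine le_of_mul_le_mul_right ?_ (by exact_mod_cast Nat.factorial_pos (a + 2 * b) :
    (0 : ℝ) < (a + 2 * b)!)
  calc _ ≤ (#{p : (Fin a → V) × (Fin b → V × V) |
        (G.induce (sampleVerts p : Set V)).Colorable 2} : ℝ) := by exact_mod_cast hsets
    _ ≤ ε / 4 * Fintype.card V ^ (a + 2 * b) := hG.card_colorable_samples_le hε hε2 hV ha hb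
    _ ≤ ε / 4 * (2 * (a + 2 * b)! * (Fintype.card V).choose (a + 2 * b)) := by
        gcongr
        exact pow_le_two_mul_factorial_mul_choose hn
    _ = _ := by ring

lemma exists_sample_sizes {ε : ℝ} (hε : 0 < ε) (hε2 : ε ≤ 2) :
    ∃ a b : ℕ, 0 < a ∧ 4 / ε * (1 - ε / 2) ^ a ≤ ε / 8 ∧ 2 ^ a * (1 - ε / 2) ^ b ≤ ε / 8 := by
  have hlim := tendsto_pow_atTop_nhds_zero_of_lt_one (r := 1 - ε / 2) (by linarith) (by linarith)
  have hsmall : ∀ c : ℝ, ∀ᶠ k in Filter.atTop, c * (1 - ε / 2) ^ k ≤ ε / 8 := fun c =>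
    (hlim.const_mul c).eventually (ge_mem_nhds (by rw [mul_zero]; positivity))
  obtain ⟨a, ha0, ha⟩ := ((Filter.eventually_gt_atTop 0).and (hsmall (4 / ε))).exists
  obtain ⟨b, hb⟩ := (hsmall (2 ^ a)).exists
  exact ⟨a, b, ha0, ha, hb⟩

/-- Alon–Shapira–Sudakov corollary: if `G` is `ε`-far from bipartite then at
least `(1 - ε/2)·C(n,m)` of its `m`-vertex induced subgraphs are non-bipartite. -/
theorem stmt13 : ∀ ε : ℝ, 0 < ε → ∃ m : ℕ, 0 < m ∧ ∀ n : ℕ, m ≤ n →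
    ∀ G : SimpleGraph (Fin n), FarFromBipartite ε G →
    (1 - ε / 2) * (n.choose m : ℝ) ≤
      (((Finset.powersetCard m (Finset.univ : Finset (Fin n))).filter
        (fun M : Finset (Fin n) => ¬ (G.induce (M : Set (Fin n))).Colorable 2)).card : ℝ) := by
  intro ε hε
  -- The sampling bounds need `ε ≤ 2`, and the claim for `min ε 2` implies the claim for `ε`.
  set δ := min ε 2
  have hδ : 0 < δ := lt_min hε two_pos
  obtain ⟨a, b, ha0, ha, hb⟩ := exists_sample_sizes hδ (min_le_right _ _)
  set k := a + 2 * b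
  have hkm : k ≤ 2 * k ^ 2 := by nlinarith
  refine ⟨2 * k ^ 2, by positivity, fun n hn G hG => ?_⟩
  have hkn : 2 * k ^ 2 ≤ Fintype.card (Fin n) := by simpa using hn
  have hbip := card_filter_powersetCard_le_of_le _
    (fun s t hst => SimpleGraph.Colorable.induce_of_subset (coe_subset.mpr hst)) hkm
    (hkm.trans hkn) <|
    (hG.mono (min_le_left _ _)).card_colorable_induce_le hδ (min_le_right _ _) ha0 ha hb hkn
  have hsplit := card_filter_add_card_filter_not (s := powersetCard (2 * k ^ 2) univ)
    fun M : Finset (Fin n) => (G.induce (M : Set (Fin n))).Colorable 2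
  rw [card_powersetCard, card_univ, Fintype.card_fin] at hsplit
  rw [Fintype.card_fin] at hbip
  have hsplit' : (n.choose (2 * k ^ 2) : ℝ) = _ := congrArg (Nat.cast (R := ℝ)) hsplit.symm
  push_cast at hsplit'
  nlinarith [min_le_left ε 2, Nat.cast_nonneg (α := ℝ) (n.choose (2 * k ^ 2))]
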